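/- arXiv:1712.00106 — 6 statements merged into one kernel-verified Lean document; each statement's English description precedes it below -/
import Mathlib

section
/- Let V : ℝ → ℝ be continuous, 1-periodic with max V = 0, let E > 0, ε > 0 and q_a ∈ ℝ. Define t_ε(q) = ∫_{q_a}^{q} 1/√(2(E − V(γ/ε))) dγ and σ(E) = ∫_0^1 1/√(2(E − V(γ))) dγ. Then for every q ≥ q_a, |t_ε(q) − σ(E)(q − q_a)| ≤ 2ε/√(2E). -/
open Real intervalIntegral

/-!
Substituting `γ = ε x` turns `t_ε(q)` into `ε ∫_{q_a/ε}^{q/ε} f` with the 1-periodic integrand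
`f x = (2(E − V x))^{-1/2}`, which is bounded by `(2E)^{-1/2}` because `V ≤ 0`. Over an interval
of length `L = ⌊L⌋ + r` a periodic integrand integrates to `⌊L⌋ σ(E)` plus the integral over
the leftover piece of length `r < 1`; comparing `⌊L⌋ σ(E)` with `L σ(E)` costs one more period.
-/

namespace Function.Periodic

variable {f : ℝ → ℝ} {T C : ℝ}

theorem abs_intervalIntegral_sub_mul_le (hf : Periodic f T) (hT : 0 < T)
    (hint : ∀ t₁ t₂, IntervalIntegrable f MeasureTheory.volume t₁ t₂)
    (hC : ∀ x, |f x| ≤ C) (a b : ℝ) :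
    |(∫ x in a..b, f x) - (b - a) / T * ∫ x in 0..T, f x| ≤ 2 * C * T := by
  have hbound : ∀ s t, |∫ x in s..t, f x| ≤ C * |t - s| := fun s t =>
    norm_integral_le_of_norm_le_const fun x _ => (Real.norm_eq_abs _).trans_le (hC x)
  have hC₀ : 0 ≤ C := (abs_nonneg _).trans (hC 0)
  set n : ℤ := ⌊(b - a) / T⌋
  set σ : ℝ := ∫ x in 0..T, f x
  have hn_le : (n : ℝ) * T ≤ b - a := (le_div_iff₀ hT).mp (Int.floor_le _)
  have hn_gt : b - a < (n + 1) * T := (div_lt_iff₀ hT).mp (Int.lt_floor_add_one _)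
  have hperiods : ∫ x in a..a + n * T, f x = n * σ := by
    rw [← zsmul_eq_mul, hf.intervalIntegral_add_zsmul_eq n a hint,
      hf.intervalIntegral_add_eq a 0, zero_add, zsmul_eq_mul]
  have hsplit : (∫ x in a..b, f x) - (b - a) / T * σ
      = σ * (n - (b - a) / T) + ∫ x in a + n * T..b, f x := by
    rw [← integral_add_adjacent_intervals (hint a (a + n * T)) (hint _ b), hperiods]
    ring
  have hσ : |σ| ≤ C * T := by
    simpa [abs_of_pos hT] using hbound 0 T
  have hfloor : |(n : ℝ) - (b - a) / T| ≤ 1 := by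
    rw [abs_sub_comm, abs_of_nonneg (sub_nonneg.mpr (Int.floor_le _))]
    linarith [Int.lt_floor_add_one ((b - a) / T)]
  have hrest : |∫ x in a + n * T..b, f x| ≤ C * T := by
    refine (hbound _ _).trans (mul_le_mul_of_nonneg_left ?_ hC₀)
    rw [abs_of_nonneg (by linarith)]
    linarith
  calc |(∫ x in a..b, f x) - (b - a) / T * σ|
      ≤ |σ| * |(n : ℝ) - (b - a) / T| + |∫ x in a + n * T..b, f x| := by
        rw [hsplit, ← abs_mul]; exact abs_add_le _ _
    _ ≤ C * T * 1 + C * T := by gcongr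
    _ = 2 * C * T := by ring

theorem abs_intervalIntegral_comp_div_sub_mul_le (hf : Periodic f T) (hT : 0 < T)
    (hint : ∀ t₁ t₂, IntervalIntegrable f MeasureTheory.volume t₁ t₂)
    (hC : ∀ x, |f x| ≤ C) {ε : ℝ} (hε : ε ≠ 0) (a b : ℝ) :
    |(∫ x in a..b, f (x / ε)) - (b - a) / T * ∫ x in 0..T, f x| ≤ 2 * C * T * |ε| := by
  have hscaled := hf.abs_intervalIntegral_sub_mul_le hT hint hC (a / ε) (b / ε)
  have hlen : b - a = ε * (b / ε - a / ε) := by field_simp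
  rw [integral_comp_div f hε, hlen, smul_eq_mul, mul_div_assoc, mul_assoc, ← mul_sub,
    abs_mul, mul_comm _ |ε|]
  exact mul_le_mul_of_nonneg_left hscaled (abs_nonneg ε)

end Function.Periodic

theorem one_div_sqrt_two_mul_sub_le {E v : ℝ} (hE : 0 < E) (hv : v ≤ 0) :
    1 / √(2 * (E - v)) ≤ 1 / √(2 * E) :=
  one_div_le_one_div_of_le (sqrt_pos.mpr (by linarith)) (sqrt_le_sqrt (by linarith))

/-- Lemma 2.1: uniform estimate for the inverse-time function
    `t_ε(q) = ∫_{q_a}^q (2(E − V(γ/ε)))^{-1/2} dγ`. -/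
theorem time_estimate
    (V : ℝ → ℝ) (hV : Continuous V) (hper : Function.Periodic V 1)
    (hmax : IsGreatest (Set.range V) 0)
    (E ε q_a : ℝ) (hE : 0 < E) (hε : 0 < ε) :
    ∀ q : ℝ, q_a ≤ q →
      |(∫ γ in q_a..q, 1 / Real.sqrt (2 * (E - V (γ / ε)))) -
          (∫ γ in (0:ℝ)..1, 1 / Real.sqrt (2 * (E - V γ))) * (q - q_a)| ≤
        2 * ε / Real.sqrt (2 * E) := by
  intro q _
  set f : ℝ → ℝ := fun x => 1 / √(2 * (E - V x))
  have hV_nonpos : ∀ x, V x ≤ 0 := fun x => hmax.2 ⟨x, rfl⟩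
  have hf_cont : Continuous f :=
    continuous_const.div (continuous_const.mul (continuous_const.sub hV)).sqrt
      fun x => (sqrt_pos.mpr (by linarith [hV_nonpos x])).ne'
  have hf_bound : ∀ x, |f x| ≤ 1 / √(2 * E) := fun x => by
    rw [abs_of_nonneg (by positivity)]
    exact one_div_sqrt_two_mul_sub_le hE (hV_nonpos x)
  have hf_per : Function.Periodic f 1 := fun x => by simp only [f, hper x]
  have := hf_per.abs_intervalIntegral_comp_div_sub_mul_le one_pos
    hf_cont.intervalIntegrable hf_bound hε.ne' q_a q
  rw [div_one, mul_comm (q - q_a)] at this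
  convert this using 1
  rw [abs_of_pos hε]
  ring
end

section
/- Let V : ℝ → ℝ be C², 1-periodic with max V = 0, fix E > 0 and q_a ∈ ℝ. For each ε > 0 let q_ε : ℝ → ℝ solve q_ε'' (t) = −(1/ε) V'(q_ε(t)/ε) with q_ε(0) = q_a, q_ε'(0) > 0, and energy (1/2)|q_ε'(t)|² + V(q_ε(t)/ε) = E for all t. Then sup_{t ∈ ℝ} |q_ε(t) − (t/σ(E) + q_a)| ≤ (2ε/√(2E))/σ(E), where σ(E) = ∫_0^1 1/√(2(E − V(γ))) dγ. -/
/-!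
Along the trajectory, energy conservation gives `q' = √(2(E - V(q/ε)))`, which never vanishes, so
by Darboux it keeps the sign of `q' 0 > 0`. Hence with `f γ = 1/√(2(E - V γ))` the time is
`t = ε ∫_{q_a/ε}^{q(t)/ε} f`. For a nonnegative `1`-periodic `f` the integral over `[a, b]` differs
from `(b - a) σ`, `σ = ∫_0^1 f`, by at most `σ`; so `|t - σ (q(t) - q_a)| ≤ ε σ`, i.e. `q` stays
within `ε ≤ 2ε / (√(2E) σ)` of the line `t/σ + q_a`, using `σ ≤ 1/√(2E)` (as `V ≤ 0`).
-/

open Real intervalIntegral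

theorem Function.Periodic.abs_intervalIntegral_sub_le {f : ℝ → ℝ} {T : ℝ}
    (hf : Function.Periodic f T) (hT : 0 < T) (hf_nonneg : ∀ x, 0 ≤ f x)
    (hf_int : IntervalIntegrable f MeasureTheory.volume 0 T) (a b : ℝ) :
    |(∫ x in a..b, f x) - (b - a) / T * ∫ x in 0..T, f x| ≤ ∫ x in 0..T, f x := by
  have hint := hf.intervalIntegrable₀ hT.ne' hf_int
  set I := ∫ x in 0..T, f x
  have hI : ∀ t, ∫ x in t..t + T, f x = I := fun t => by
    simpa using hf.intervalIntegral_add_eq t 0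
  have hdev_periodic : Function.Periodic (fun b => (∫ x in a..b, f x) - (b - a) / T * I) T := by
    intro b
    simp only [hf.intervalIntegral_add_eq_add a b hint, hI]
    field_simp
    ring
  -- reduce to `b ∈ [a, a + T)`, where both terms lie in `[0, ∫ x in 0..T, f x]`
  obtain ⟨c, ⟨hac, hca⟩, hbc⟩ := hdev_periodic.exists_mem_Ico hT b a
  rw [hbc]
  have hlow : 0 ≤ ∫ x in a..c, f x := integral_nonneg hac fun x _ => hf_nonneg x
  have hup : ∫ x in a..c, f x ≤ I := by
    have hrest : 0 ≤ ∫ x in c..a + T, f x := integral_nonneg hca.le fun x _ => hf_nonneg x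
    rw [← hI a, ← integral_add_adjacent_intervals (hint a c) (hint c (a + T))]
    linarith
  have hfrac : 0 ≤ (c - a) / T ∧ (c - a) / T ≤ 1 := by
    constructor
    · exact div_nonneg (by linarith) hT.le
    · rw [div_le_one hT]; linarith
  rw [abs_le]
  constructor <;> nlinarith

theorem integral_eq_mul_of_mul_deriv_eq {f q q' : ℝ → ℝ} {c : ℝ} (hf : Continuous f)
    (hq : ∀ t, HasDerivAt q (q' t) t) (hfq : ∀ t, f (q t) * q' t = c) (t : ℝ) :
    ∫ x in q 0..q t, f x = c * t := by
  have hderiv : ∀ s, HasDerivAt (fun s => ∫ x in q 0..q s, f x) c s := fun s => by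
    rw [← hfq s]
    exact (hf.integral_hasStrictDerivAt (q 0) (q s)).hasDerivAt.comp s (hq s)
  simpa [mul_comm] using (integral_eq_sub_of_hasDerivAt (fun s _ => hderiv s)
    (intervalIntegrable_const (c := c) (a := 0) (b := t))).symm

theorem pos_of_hasDerivAt_of_ne_zero {q q' : ℝ → ℝ} (hq : ∀ t, HasDerivAt q (q' t) t)
    (hne : ∀ t, q' t ≠ 0) {t₀ : ℝ} (ht₀ : 0 < q' t₀) (t : ℝ) : 0 < q' t := by
  rcases hasDerivWithinAt_forall_lt_or_forall_gt_of_forall_ne convex_univ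
    (fun t _ => (hq t).hasDerivWithinAt) (fun t _ => hne t) with hneg | hpos
  · exact absurd (hneg t₀ trivial) ht₀.not_gt
  · exact hpos t trivial

theorem abs_sub_div_integral_le {f q q' : ℝ → ℝ} {ε : ℝ} (hε : 0 < ε) (hf : Continuous f)
    (hper : Function.Periodic f 1) (hf_pos : ∀ x, 0 < f x) (hq : ∀ t, HasDerivAt q (q' t) t)
    (hfq : ∀ t, f (q t / ε) * q' t = 1) (t : ℝ) :
    |q t - (t / (∫ x in (0:ℝ)..1, f x) + q 0)| ≤ ε := by
  set σ := ∫ x in (0:ℝ)..1, f x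
  have hσ : 0 < σ := intervalIntegral_pos_of_pos_on (hf.intervalIntegrable 0 1)
    (fun x _ => hf_pos x) one_pos
  have htime : ∫ x in q 0 / ε..q t / ε, f x = 1 / ε * t :=
    integral_eq_mul_of_mul_deriv_eq hf (fun s => (hq s).div_const ε)
      (fun s => by rw [← hfq s]; ring) t
  have hdev := hper.abs_intervalIntegral_sub_le one_pos (fun x => (hf_pos x).le)
    (hf.intervalIntegrable 0 1) (q 0 / ε) (q t / ε)
  rw [htime, div_one] at hdev
  have hrescale : q t - (t / σ + q 0) = -(ε / σ) * (1 / ε * t - (q t / ε - q 0 / ε) * σ) := by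
    field_simp
    ring
  calc |q t - (t / σ + q 0)| = ε / σ * |1 / ε * t - (q t / ε - q 0 / ε) * σ| := by
        rw [hrescale, abs_mul, abs_neg, abs_of_pos (div_pos hε hσ)]
    _ ≤ ε / σ * σ := by gcongr
    _ = ε := div_mul_cancel₀ ε hσ.ne'

theorem continuous_one_div_sqrt_two_mul_sub {V : ℝ → ℝ} {E : ℝ} (hV : Continuous V)
    (hVE : ∀ γ, V γ < E) : Continuous fun γ => 1 / √(2 * (E - V γ)) :=
  continuous_const.div (by fun_prop) fun γ => (sqrt_pos.2 (by linarith [hVE γ])).ne'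

theorem integral_one_div_sqrt_two_mul_sub_le {V : ℝ → ℝ} {E : ℝ} (hV : Continuous V)
    (hE : 0 < E) (hV_nonpos : ∀ γ, V γ ≤ 0) :
    ∫ γ in (0:ℝ)..1, 1 / √(2 * (E - V γ)) ≤ 1 / √(2 * E) := by
  have hf := continuous_one_div_sqrt_two_mul_sub hV fun γ => by linarith [hV_nonpos γ]
  refine (integral_mono_on zero_le_one (hf.intervalIntegrable 0 1) intervalIntegrable_const
    fun γ _ => ?_).trans_eq (by rw [integral_const, sub_zero, one_smul])
  exact one_div_le_one_div_of_le (by positivity) (sqrt_le_sqrt (by linarith [hV_nonpos γ]))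

theorem ivp_fixed_energy_uniform_convergence_general
    (V : ℝ → ℝ) (hV : ContDiff ℝ 2 V) (hper : Function.Periodic V 1)
    (hmax : IsGreatest (Set.range V) 0)
    (E q_a ε : ℝ) (hE : 0 < E) (hε : 0 < ε)
    (q q' : ℝ → ℝ)
    (hq : ∀ t, HasDerivAt q (q' t) t)
    (h0 : q 0 = q_a) (h0' : 0 < q' 0)
    (henergy : ∀ t, (1 / 2) * (q' t) ^ 2 + V (q t / ε) = E) :
    ∀ t : ℝ,
      |q t - (t / (∫ γ in (0:ℝ)..1, 1 / Real.sqrt (2 * (E - V γ))) + q_a)| ≤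
        (2 * ε / Real.sqrt (2 * E)) /
          (∫ γ in (0:ℝ)..1, 1 / Real.sqrt (2 * (E - V γ))) := by
  intro t
  set f := fun γ => 1 / √(2 * (E - V γ))
  have hV_nonpos : ∀ γ, V γ ≤ 0 := fun γ => hmax.2 ⟨γ, rfl⟩
  have hf : Continuous f :=
    continuous_one_div_sqrt_two_mul_sub hV.continuous fun γ => by linarith [hV_nonpos γ]
  have hf_per : Function.Periodic f 1 := fun γ => by simp only [f, hper γ]
  have hf_pos : ∀ γ, 0 < f γ := fun γ => one_div_pos.2 (sqrt_pos.2 (by linarith [hV_nonpos γ]))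
  have hσ_pos : 0 < ∫ γ in (0:ℝ)..1, f γ := intervalIntegral_pos_of_pos_on
    (hf.intervalIntegrable 0 1) (fun x _ => hf_pos x) one_pos
  have hkinetic : ∀ t, q' t ^ 2 = 2 * (E - V (q t / ε)) := fun t => by linarith [henergy t]
  have hspeed_pos : ∀ t, 0 < q' t := pos_of_hasDerivAt_of_ne_zero hq
    (fun t h => by nlinarith [hkinetic t, hV_nonpos (q t / ε)]) h0'
  have hfq : ∀ t, f (q t / ε) * q' t = 1 := fun t => by
    change 1 / √(2 * (E - V (q t / ε))) * q' t = 1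
    rw [← hkinetic t, sqrt_sq (hspeed_pos t).le, one_div_mul_cancel (hspeed_pos t).ne']
  calc _ ≤ ε := h0 ▸ abs_sub_div_integral_le hε hf hf_per hf_pos hq hfq t
    _ ≤ _ := by
      rw [le_div_iff₀ hσ_pos]
      calc ε * ∫ γ in (0:ℝ)..1, f γ ≤ ε * (1 / √(2 * E)) := by
            gcongr
            exact integral_one_div_sqrt_two_mul_sub_le hV.continuous hE hV_nonpos
        _ ≤ 2 * ε / √(2 * E) := by
          rw [mul_one_div]
          gcongr
          linarith

/-- Theorem 2.2: for the fixed-energy initial value problem, solutions converge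
    uniformly (with rate ε) to the line `t ↦ t/σ(E) + q_a`. -/
theorem ivp_fixed_energy_uniform_convergence
    (V : ℝ → ℝ) (hV : ContDiff ℝ 2 V) (hper : Function.Periodic V 1)
    (hmax : IsGreatest (Set.range V) 0)
    (E q_a ε : ℝ) (hE : 0 < E) (hε : 0 < ε)
    (q q' : ℝ → ℝ)
    (hq : ∀ t, HasDerivAt q (q' t) t)
    (hODE : ∀ t, HasDerivAt q' (-(1 / ε) * deriv V (q t / ε)) t)
    (h0 : q 0 = q_a) (h0' : 0 < q' 0)
    (henergy : ∀ t, (1 / 2) * (q' t) ^ 2 + V (q t / ε) = E) :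
    ∀ t : ℝ,
      |q t - (t / (∫ γ in (0:ℝ)..1, 1 / Real.sqrt (2 * (E - V γ))) + q_a)| ≤
        (2 * ε / Real.sqrt (2 * E)) /
          (∫ γ in (0:ℝ)..1, 1 / Real.sqrt (2 * (E - V γ))) :=
  ivp_fixed_energy_uniform_convergence_general V hV hper hmax E q_a ε hE hε q q' hq h0 h0' henergy
end

section
/- Let V : ℝ → ℝ be C², 1-periodic with max V = 0, attaining its maximum at 0. Define σ(E) = ∫_0^1 1/√(2(E − V(γ))) dγ for E > 0. Then σ(E) → ∞ as E → 0⁺. -/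
/-!
Since `V` is `C²` with a maximum `0` at `0`, we have `V' 0 = 0` and hence `-V γ ≤ k² γ²`
on `[0, 1]`. Then `2 (E - V γ) ≤ 2 (√E + k γ)²`, so
`σ(E) ≥ ∫₀¹ (√2 (√E + k γ))⁻¹ dγ = (√2 k)⁻¹ log (1 + k / √E)`, which diverges as `E → 0⁺`.
-/

open Real intervalIntegral Filter Set Topology

theorem ContDiff.abs_sub_le_mul_sq_of_deriv_eq_zero {f : ℝ → ℝ} (hf : ContDiff ℝ 2 f) {a : ℝ}
    (ha : deriv f a = 0) (b : ℝ) : ∃ C > 0, ∀ t ∈ Icc a b, |f t - f a| ≤ C * (t - a) ^ 2 := by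
  have hf' : ContDiff ℝ 1 (deriv f) := hf.iterate_deriv' 1 1
  obtain ⟨M, hM⟩ := isCompact_Icc.exists_bound_of_continuousOn
    (hf'.continuous_deriv le_rfl).continuousOn (s := Icc a b)
  refine ⟨max M 1, by positivity, fun t ht => ?_⟩
  have hderiv : ∀ s ∈ Icc a b, |deriv f s| ≤ max M 1 * (s - a) := by
    simpa [ha] using norm_image_sub_le_of_norm_deriv_le_segment'
      (fun x _ => ((hf'.differentiable one_ne_zero) x).hasDerivAt.hasDerivWithinAt)
      (fun x hx => (hM x (Ico_subset_Icc_self hx)).trans (le_max_left M 1))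
  have hmvt := norm_image_sub_le_of_norm_deriv_le_segment' (f := f) (b := t)
    (C := max M 1 * (t - a))
    (fun x _ => ((hf.differentiable (by norm_num)) x).hasDerivAt.hasDerivWithinAt)
    (fun s hs => (hderiv s ⟨hs.1, hs.2.le.trans ht.2⟩).trans (by gcongr; exact hs.2.le))
    t (right_mem_Icc.2 ht.1)
  simpa [sq, mul_assoc] using hmvt

theorem tendsto_sqrt_nhdsGT_zero : Tendsto Real.sqrt (𝓝[>] 0) (𝓝[>] 0) :=
  tendsto_nhdsWithin_iff.2
    ⟨by simpa using (continuous_sqrt.tendsto 0).mono_left nhdsWithin_le_nhds,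
      eventually_mem_nhdsWithin.mono fun _ hx => sqrt_pos.2 hx⟩

theorem tendsto_log_one_add_div_sqrt {k : ℝ} (hk : 0 < k) :
    Tendsto (fun E => log (1 + k / √E)) (𝓝[>] 0) atTop :=
  tendsto_log_atTop.comp <| tendsto_atTop_add_const_left _ 1 <|
    by simpa [div_eq_mul_inv] using
      (tendsto_inv_nhdsGT_zero.comp tendsto_sqrt_nhdsGT_zero).const_mul_atTop hk

theorem integral_inv_add_mul {a k : ℝ} (ha : 0 < a) (hk : 0 < k) :
    ∫ γ in (0:ℝ)..1, (a + k * γ)⁻¹ = k⁻¹ * log (1 + k / a) := by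
  have := intervalIntegral.integral_comp_mul_add (a := 0) (b := 1) (fun x => x⁻¹) hk.ne' a
  simp only [mul_zero, zero_add, mul_one] at this
  rw [integral_inv_of_pos ha (by positivity)] at this
  simp_rw [add_comm a]
  rw [this, smul_eq_mul, add_div, div_self ha.ne', add_comm]

theorem inv_sqrt_two_mul_add_le_one_div_sqrt {E v k γ : ℝ} (hE : 0 < E) (hv : v ≤ 0)
    (hk : 0 ≤ k) (hγ : 0 ≤ γ) (hvγ : -v ≤ k ^ 2 * γ ^ 2) :
    (√2 * (√E + k * γ))⁻¹ ≤ 1 / √(2 * (E - v)) := by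
  have hsq : 2 * (E - v) ≤ (√2 * (√E + k * γ)) ^ 2 := by
    have : 0 ≤ √E * (k * γ) := by positivity
    rw [mul_pow, sq_sqrt zero_le_two, add_sq, sq_sqrt hE.le, mul_pow]
    nlinarith
  rw [one_div]
  gcongr
  · exact sqrt_pos.2 (by linarith)
  · simpa [sqrt_sq (by positivity : 0 ≤ √2 * (√E + k * γ))] using sqrt_le_sqrt hsq

theorem mul_log_one_add_div_sqrt_le_integral {V : ℝ → ℝ} (hV : ContinuousOn V (Icc 0 1))
    (hle : ∀ γ ∈ Icc (0:ℝ) 1, V γ ≤ 0) {k : ℝ} (hk : 0 < k)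
    (hbound : ∀ γ ∈ Icc (0:ℝ) 1, -V γ ≤ k ^ 2 * γ ^ 2) {E : ℝ} (hE : 0 < E) :
    (√2 * k)⁻¹ * log (1 + k / √E) ≤ ∫ γ in (0:ℝ)..1, 1 / √(2 * (E - V γ)) := by
  have hsE : 0 < √E := sqrt_pos.2 hE
  calc (√2 * k)⁻¹ * log (1 + k / √E)
      = ∫ γ in (0:ℝ)..1, (√2 * (√E + k * γ))⁻¹ := by
        simp_rw [mul_inv (√2)]
        rw [integral_const_mul, integral_inv_add_mul hsE hk, mul_assoc]
    _ ≤ ∫ γ in (0:ℝ)..1, 1 / √(2 * (E - V γ)) := by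
        refine integral_mono_on zero_le_one ?_ ?_ fun γ hγ =>
          inv_sqrt_two_mul_add_le_one_div_sqrt hE (hle γ hγ) hk.le hγ.1 (hbound γ hγ)
        · exact (ContinuousOn.inv₀ (by fun_prop) fun γ hγ => by
            have := hγ.1; positivity).intervalIntegrable_of_Icc zero_le_one
        · exact (continuousOn_const.div (by fun_prop) fun γ hγ =>
            (sqrt_pos.2 (by linarith [hle γ hγ])).ne').intervalIntegrable_of_Icc zero_le_one

theorem sigma_blow_up_general
    (V : ℝ → ℝ) (hV : ContDiff ℝ 2 V)
    (hmax : IsGreatest (Set.range V) 0) (h0 : V 0 = 0) :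
    Tendsto (fun E : ℝ => ∫ γ in (0:ℝ)..1, 1 / Real.sqrt (2 * (E - V γ)))
      (nhdsWithin 0 (Set.Ioi 0)) atTop := by
  have hle : ∀ x, V x ≤ 0 := fun x => hmax.2 ⟨x, rfl⟩
  have hmax0 : IsLocalMax V 0 := Eventually.of_forall fun x => (hle x).trans_eq h0.symm
  obtain ⟨C, hC, hquad⟩ := hV.abs_sub_le_mul_sq_of_deriv_eq_zero hmax0.deriv_eq_zero 1
  have hbound : ∀ γ ∈ Icc (0:ℝ) 1, -V γ ≤ √C ^ 2 * γ ^ 2 := fun γ hγ => by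
    simpa [h0, sq_sqrt hC.le] using (neg_le_abs (V γ - V 0)).trans (hquad γ hγ)
  have hk : 0 < √C := sqrt_pos.2 hC
  refine tendsto_atTop_mono' _ ?_ ((tendsto_log_one_add_div_sqrt hk).const_mul_atTop
    (by positivity : 0 < (√2 * √C)⁻¹))
  filter_upwards [self_mem_nhdsWithin] with E hE
  exact mul_log_one_add_div_sqrt_le_integral hV.continuous.continuousOn (fun γ _ => hle γ) hk
    hbound hE

/-- Lemma 2.3: `σ(E) = ∫_0^1 (2(E − V(γ)))^{-1/2} dγ` blows up as `E → 0⁺`. -/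
theorem sigma_blow_up
    (V : ℝ → ℝ) (hV : ContDiff ℝ 2 V) (hper : Function.Periodic V 1)
    (hmax : IsGreatest (Set.range V) 0) (h0 : V 0 = 0) :
    Tendsto (fun E : ℝ => ∫ γ in (0:ℝ)..1, 1 / Real.sqrt (2 * (E - V γ)))
      (nhdsWithin 0 (Set.Ioi 0)) atTop :=
  sigma_blow_up_general V hV hmax h0
end

section
/- Let V be C², 1-periodic, max V = 0, attaining its maximum at 0, and let C_V > 0 bound −V'' from above (i.e. V'' > −C_V). Then for every E > 0, σ(E) = ∫_0^1 1/√(2(E − V(γ))) dγ ≥ (1/√(C_V)) · arcsinh(√(C_V/(2E))). -/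
/-!
Since `V` is maximal at `0`, `V' 0 = 0`, and `V'' ≥ -C_V` makes `V γ + (C_V / 2) γ²` convex with a
critical point at `0`; hence `V γ ≥ -(C_V / 2) γ²`. The integrand of `σ(E)` therefore dominates
`1 / √(2E + C_V γ²)`, whose integral over `[0, 1]` is `arsinh (√(C_V / (2E))) / √C_V`.
-/

open Real intervalIntegral Set

theorem sub_half_mul_sq_le_of_deriv_eq_zero {f : ℝ → ℝ} {C x₀ : ℝ}
    (hf : Differentiable ℝ f) (hf' : Differentiable ℝ (deriv f)) (hx₀ : deriv f x₀ = 0)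
    (hC : ∀ x, -C ≤ deriv (deriv f) x) (x : ℝ) :
    f x₀ - C / 2 * (x - x₀) ^ 2 ≤ f x := by
  set g : ℝ → ℝ := fun x => f x + C / 2 * (x - x₀) ^ 2
  have hg : ∀ x, HasDerivAt g (deriv f x + C * (x - x₀)) x := fun x => by
    refine ((hf x).hasDerivAt.fun_add
      (((HasDerivAt.sub_const x₀ (hasDerivAt_id' x)).fun_pow 2).const_mul (C / 2))).congr_deriv ?_
    norm_num
    ring
  have hg' : deriv g = fun x => deriv f x + C * (x - x₀) := funext fun x => (hg x).deriv
  have hg'' : ∀ x, HasDerivAt (deriv g) (deriv (deriv f) x + C) x := fun x => by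
    rw [hg']
    exact ((hf' x).hasDerivAt.fun_add
      ((HasDerivAt.sub_const x₀ (hasDerivAt_id' x)).const_mul C)).congr_deriv (by ring)
  have hconvex : ConvexOn ℝ univ g :=
    convexOn_univ_of_deriv2_nonneg (fun x => (hg x).differentiableAt)
      (fun x => (hg'' x).differentiableAt) fun x => by
        rw [Function.iterate_succ_apply, Function.iterate_one, (hg'' x).deriv]
        linarith [hC x]
  have hmin : IsMinOn g univ x₀ := by
    refine hconvex.isMinOn_of_rightDeriv_eq_zero (by simp) ?_
    rw [(hg x₀).hasDerivWithinAt.derivWithin (uniqueDiffWithinAt_Ioi x₀), hx₀]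
    ring
  have hgx : g x₀ ≤ g x := hmin (mem_univ x)
  simp only [g, sub_self] at hgx
  linarith

theorem hasDerivAt_arsinh_sqrt_div_mul {a c : ℝ} (ha : 0 < a) (hc : 0 < c) (x : ℝ) :
    HasDerivAt (fun x => 1 / √c * arsinh (√(c / a) * x)) (1 / √(a + c * x ^ 2)) x := by
  refine (((hasDerivAt_id' x).const_mul √(c / a)).arsinh.const_mul (1 / √c)).congr_deriv ?_
  have hsqrt : √(1 + (√(c / a) * x) ^ 2) = √(a + c * x ^ 2) / √a := by
    rw [← sqrt_div (by positivity), mul_pow, sq_sqrt (by positivity)]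
    congr 1
    field_simp
  have : 0 < √(a + c * x ^ 2) := sqrt_pos.2 (by positivity)
  rw [hsqrt, sqrt_div hc.le, smul_eq_mul]
  field_simp

theorem integral_one_div_sqrt_add_mul_sq {a c : ℝ} (ha : 0 < a) (hc : 0 < c) (b : ℝ) :
    ∫ x in (0 : ℝ)..b, 1 / √(a + c * x ^ 2) = 1 / √c * arsinh (√(c / a) * b) := by
  rw [integral_eq_sub_of_hasDerivAt (fun x _ => hasDerivAt_arsinh_sqrt_div_mul ha hc x)]
  · simp
  · exact (continuous_const.div (by fun_prop)
      fun x => (sqrt_pos.2 (by positivity)).ne').intervalIntegrable _ _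

theorem sigma_lower_bound_general
    (V : ℝ → ℝ) (hV : ContDiff ℝ 2 V)
    (hmax : IsGreatest (Set.range V) 0) (h0 : V 0 = 0)
    (C_V : ℝ) (hC : 0 < C_V) (hC' : ∀ s : ℝ, -C_V < deriv (deriv V) s) :
    ∀ E : ℝ, 0 < E →
      (1 / Real.sqrt C_V) * Real.arsinh (Real.sqrt (C_V / (2 * E))) ≤
        ∫ γ in (0:ℝ)..1, 1 / Real.sqrt (2 * (E - V γ)) := by
  intro E hE
  have hV_nonpos : ∀ γ, V γ ≤ 0 := fun γ => hmax.2 ⟨γ, rfl⟩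
  have hV' : ContDiff ℝ 1 (deriv V) := (contDiff_succ_iff_deriv (n := 1)).1 hV |>.2.2
  have hcrit : deriv V 0 = 0 :=
    IsLocalMax.deriv_eq_zero <| .of_forall fun γ => h0.symm ▸ hV_nonpos γ
  have hquad (γ : ℝ) : -(C_V / 2) * γ ^ 2 ≤ V γ := by
    simpa [h0] using sub_half_mul_sq_le_of_deriv_eq_zero (hV.differentiable two_ne_zero)
      (hV'.differentiable one_ne_zero) hcrit (fun s => (hC' s).le) γ
  have hpos (γ : ℝ) : 0 < √(2 * (E - V γ)) := sqrt_pos.2 (by linarith [hV_nonpos γ])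
  calc 1 / √C_V * arsinh √(C_V / (2 * E))
      = ∫ γ in (0 : ℝ)..1, 1 / √(2 * E + C_V * γ ^ 2) := by
        rw [integral_one_div_sqrt_add_mul_sq (by positivity) hC, mul_one]
    _ ≤ ∫ γ in (0 : ℝ)..1, 1 / √(2 * (E - V γ)) := by
        refine integral_mono zero_le_one ?_ ?_ fun γ => ?_
        · exact (continuous_const.div (by fun_prop)
            fun γ => (sqrt_pos.2 (by positivity)).ne').intervalIntegrable _ _
        · exact (continuous_const.div (by fun_prop : Continuous fun γ => √(2 * (E - V γ)))
            fun γ => (hpos γ).ne').intervalIntegrable _ _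
        · exact one_div_le_one_div_of_le (hpos γ) (sqrt_le_sqrt (by linarith [hquad γ]))

/-- The quantitative lower bound on `σ(E)` in terms of `arcsinh`. -/
theorem sigma_lower_bound
    (V : ℝ → ℝ) (hV : ContDiff ℝ 2 V) (hper : Function.Periodic V 1)
    (hmax : IsGreatest (Set.range V) 0) (h0 : V 0 = 0)
    (C_V : ℝ) (hC : 0 < C_V) (hC' : ∀ s : ℝ, -C_V < deriv (deriv V) s) :
    ∀ E : ℝ, 0 < E →
      (1 / Real.sqrt C_V) * Real.arsinh (Real.sqrt (C_V / (2 * E))) ≤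
        ∫ γ in (0:ℝ)..1, 1 / Real.sqrt (2 * (E - V γ)) :=
  sigma_lower_bound_general V hV hmax h0 C_V hC hC'
end

section
/- Let V be C², 1-periodic with max V = 0 and min V < 0, and fix q_a ≠ 0 and p_a > 0 with p_a < √(−2 min V). Then for every E with 0 < E ≤ p_a²/2 there exists a sequence ε_k → 0 such that the solutions q_{ε_k} of q'' = −(1/ε_k) V'(q/ε_k) with q_{ε_k}(0) = q_a and q_{ε_k}'(0) = p_a all have total energy E, and converge uniformly on ℝ to the line q(t) = t/σ(E) + q_a. -/
open Real intervalIntegral Filter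

/-!
Along a solution of `q'' = -(1/ε) V'(q/ε)` the energy `q'²/2 + V(q/ε)` is conserved. With energy
`E > 0 ≥ V` the velocity never vanishes, so `q' = √(2(E - V(q/ε)))` and
`t = ∫_{q_a}^{q(t)} ds / √(2(E - V(s/ε)))`. The integrand is `ε`-periodic with mean `σ(E)`, so the
integral equals `σ(E) (q(t) - q_a) + O(ε)` uniformly in `t`, i.e. `q(t) = t/σ(E) + q_a + O(ε)`.
Energy exactly `E` is arranged by choosing `ε_k = q_a / c_k` with `V(c_k) = E - p_a²/2`, `c_k` running
through translates by integers of one solution `x₀` of that equation.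
-/

namespace Function.Periodic

variable {f : ℝ → ℝ} {T : ℝ}

lemma exists_abs_intervalIntegral_sub_mul_le (hper : Periodic f T) (hT : T ≠ 0)
    (hf : Continuous f) :
    ∃ C, ∀ x y, |(∫ s in x..y, f s) - (y - x) * ((∫ s in (0 : ℝ)..T, f s) / T)| ≤ C := by
  set m := (∫ s in (0 : ℝ)..T, f s) / T
  have hint : ∀ a b, IntervalIntegrable f MeasureTheory.volume a b :=
    fun a b => hf.intervalIntegrable a b
  set G : ℝ → ℝ := fun x => (∫ s in (0 : ℝ)..x, f s) - x * m
  have hGcont : Continuous G := (continuous_primitive hint 0).sub (by fun_prop)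
  have hGper : Periodic G T := fun x => by
    simp only [G, m]
    rw [← integral_add_adjacent_intervals (hint 0 x) (hint x (x + T)),
      hper.intervalIntegral_add_eq x 0, zero_add]
    field_simp
    ring
  obtain ⟨C, hC⟩ := isBounded_iff_forall_norm_le.1 (hGper.isBounded_of_continuous hT hGcont)
  refine ⟨C + C, fun x y => ?_⟩
  have hdiff : (∫ s in x..y, f s) - (y - x) * m = G y - G x := by
    simp only [G]
    rw [← integral_interval_sub_left (hint 0 y) (hint 0 x)]
    ring
  rw [hdiff]
  exact (abs_sub _ _).trans (add_le_add (hC _ ⟨y, rfl⟩) (hC _ ⟨x, rfl⟩))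

lemma exists_abs_intervalIntegral_comp_div_sub_mul_le (hper : Periodic f T) (hT : T ≠ 0)
    (hf : Continuous f) :
    ∃ C, ∀ ε, 0 < ε → ∀ x y,
      |(∫ s in x..y, f (s / ε)) - (y - x) * ((∫ s in (0 : ℝ)..T, f s) / T)| ≤ C * ε := by
  obtain ⟨C, hC⟩ := hper.exists_abs_intervalIntegral_sub_mul_le hT hf
  refine ⟨C, fun ε hε x y => ?_⟩
  set m := (∫ s in (0 : ℝ)..T, f s) / T
  calc |(∫ s in x..y, f (s / ε)) - (y - x) * m|
      = ε * |(∫ s in x / ε..y / ε, f s) - (y / ε - x / ε) * m| := by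
        rw [integral_comp_div f hε.ne', smul_eq_mul, ← abs_of_pos hε, ← abs_mul,
          abs_of_pos hε]
        congr 1
        field_simp
    _ ≤ ε * C := mul_le_mul_of_nonneg_left (hC _ _) hε.le
    _ = C * ε := mul_comm _ _

variable {V : ℝ → ℝ}

lemma exists_seq_pos_tendsto_zero_apply_div_eq_of_pos (hper : Periodic V 1) (x₀ : ℝ) {q : ℝ}
    (hq : 0 < q) :
    ∃ ε : ℕ → ℝ, (∀ k, 0 < ε k) ∧ Tendsto ε atTop (nhds 0) ∧ ∀ k, V (q / ε k) = V x₀ := by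
  set c : ℕ → ℝ := fun k => x₀ + ((k + (⌈|x₀|⌉₊ + 1) : ℕ) : ℝ)
  have hcpos : ∀ k, 0 < c k := fun k => by
    have := Nat.le_ceil |x₀|
    have := neg_abs_le x₀
    simp only [c]
    push_cast
    linarith [(Nat.cast_nonneg k : (0 : ℝ) ≤ k)]
  have hctop : Tendsto c atTop atTop :=
    tendsto_atTop_add_const_left _ _
      (tendsto_natCast_atTop_atTop.comp (tendsto_add_atTop_nat _))
  refine ⟨fun k => q / c k, fun k => div_pos hq (hcpos k),
    tendsto_const_nhds.div_atTop hctop, fun k => ?_⟩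
  rw [div_div_cancel₀ hq.ne']
  simpa [c] using (hper.nat_mul (k + (⌈|x₀|⌉₊ + 1))) x₀

lemma exists_seq_pos_tendsto_zero_apply_div_eq (hper : Periodic V 1) (x₀ : ℝ) {q : ℝ}
    (hq : q ≠ 0) :
    ∃ ε : ℕ → ℝ, (∀ k, 0 < ε k) ∧ Tendsto ε atTop (nhds 0) ∧ ∀ k, V (q / ε k) = V x₀ := by
  rcases hq.lt_or_gt with hneg | hpos
  · have hper' : Periodic (fun x => V (-x)) 1 := fun x => by
      simpa only [neg_add] using hper.neg (-x)
    obtain ⟨ε, hεpos, hεlim, hεV⟩ :=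
      hper'.exists_seq_pos_tendsto_zero_apply_div_eq_of_pos (-x₀) (neg_pos.2 hneg)
    exact ⟨ε, hεpos, hεlim, fun k => by simpa [neg_div] using hεV k⟩
  · exact hper.exists_seq_pos_tendsto_zero_apply_div_eq_of_pos x₀ hpos

end Function.Periodic

lemma energy_eq_of_hasDerivAt {V : ℝ → ℝ} (hV : Differentiable ℝ V) {ε : ℝ} {q q' : ℝ → ℝ}
    (hq : ∀ t, HasDerivAt q (q' t) t)
    (hq' : ∀ t, HasDerivAt q' (-(1 / ε) * deriv V (q t / ε)) t) (t : ℝ) :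
    1 / 2 * q' t ^ 2 + V (q t / ε) = 1 / 2 * q' 0 ^ 2 + V (q 0 / ε) := by
  have hderiv : ∀ s, HasDerivAt (fun u => 1 / 2 * q' u ^ 2 + V (q u / ε)) 0 s := fun s => by
    have hpot := (hV (q s / ε)).hasDerivAt.comp s ((hq s).div_const ε)
    refine ((((hq' s).pow 2).const_mul (1 / 2)).add hpot).congr_deriv ?_
    simp only [Nat.cast_ofNat, pow_one, Nat.add_one_sub_one]
    ring
  exact is_const_of_deriv_eq_zero (fun s => (hderiv s).differentiableAt)
    (fun s => (hderiv s).deriv) t 0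

lemma eq_sqrt_of_sq_eq {u w : ℝ → ℝ} (hu : Continuous u) (hw : ∀ t, 0 < w t)
    (hsq : ∀ t, u t ^ 2 = w t) (h0 : 0 < u 0) (t : ℝ) : u t = √(w t) := by
  have hne : ∀ s, u s ≠ 0 := fun s hs => (hw s).ne' (by rw [← hsq, hs]; ring)
  have hpos : 0 < u t := by
    by_contra! hle
    obtain ⟨s, hs⟩ := intermediate_value_univ t 0 hu ⟨hle, h0.le⟩
    exact hne s hs
  rw [← hsq, sqrt_sq hpos.le]

lemma intervalIntegral_comp_eq_of_mul_eq_one {g q q' : ℝ → ℝ} (hg : Continuous g)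
    (hq : ∀ t, HasDerivAt q (q' t) t) (hq' : Continuous q') (h : ∀ t, g (q t) * q' t = 1)
    (t : ℝ) : ∫ s in q 0..q t, g s = t := by
  rw [← integral_comp_mul_deriv (fun x _ => hq x) hq'.continuousOn hg]
  simp [h]

lemma abs_sub_le_of_mul_eq_one {g q q' : ℝ → ℝ} {σ C : ℝ} (hσ : 0 < σ) (hg : Continuous g)
    (hq : ∀ t, HasDerivAt q (q' t) t) (hq' : Continuous q') (h : ∀ t, g (q t) * q' t = 1)
    (hC : ∀ x y, |(∫ s in x..y, g s) - (y - x) * σ| ≤ C) (t : ℝ) :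
    |q t - (t / σ + q 0)| ≤ C / σ := by
  have hbound := hC (q 0) (q t)
  rw [intervalIntegral_comp_eq_of_mul_eq_one hg hq hq' h t] at hbound
  rw [show q t - (t / σ + q 0) = -((t - (q t - q 0) * σ) / σ) by field_simp; ring, abs_neg,
    abs_div, abs_of_pos hσ]
  gcongr

lemma abs_sub_le_of_energy_eq {V : ℝ → ℝ} (hV : Differentiable ℝ V) {E ε σ C : ℝ}
    (hpos : ∀ s, 0 < 2 * (E - V s)) (hσ : 0 < σ)
    (hC : ∀ x y, |(∫ s in x..y, 1 / √(2 * (E - V (s / ε)))) - (y - x) * σ| ≤ C)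
    {q q' : ℝ → ℝ} (hq : ∀ t, HasDerivAt q (q' t) t)
    (hq' : ∀ t, HasDerivAt q' (-(1 / ε) * deriv V (q t / ε)) t) (hq'0 : 0 < q' 0)
    (henergy : 1 / 2 * q' 0 ^ 2 + V (q 0 / ε) = E) (t : ℝ) :
    |q t - (t / σ + q 0)| ≤ C / σ := by
  have hq'cont : Continuous q' := continuous_iff_continuousAt.2 fun t => (hq' t).continuousAt
  have hvel : ∀ t, q' t = √(2 * (E - V (q t / ε))) :=
    eq_sqrt_of_sq_eq hq'cont (fun t => hpos _) (fun t => by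
      linarith [energy_eq_of_hasDerivAt hV hq hq' t]) hq'0
  have hg : Continuous fun s => 1 / √(2 * (E - V (s / ε))) :=
    continuous_const.div (by have := hV.continuous; fun_prop) fun s => (sqrt_pos.2 (hpos _)).ne'
  refine abs_sub_le_of_mul_eq_one hσ hg hq hq'cont (fun t => ?_) hC t
  rw [hvel t]
  exact one_div_mul_cancel (sqrt_pos.2 (hpos _)).ne'

lemma tendstoUniformly_of_dist_le {ι α β : Type*} [PseudoMetricSpace β] {p : Filter ι}
    {F : ι → α → β} {f : α → β} {δ : ι → ℝ} (h : ∀ n x, dist (f x) (F n x) ≤ δ n)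
    (hδ : Tendsto δ p (nhds 0)) : TendstoUniformly F f p :=
  Metric.tendstoUniformly_iff.2 fun _ hr =>
    (hδ.eventually_lt_const hr).mono fun n hn x => (h n x).trans_lt hn

theorem ivp_fixed_velocity_family_of_limits_general
    (V : ℝ → ℝ) (hV : ContDiff ℝ 2 V) (hper : Function.Periodic V 1)
    (hmax : IsGreatest (Set.range V) 0)
    (Vmin : ℝ) (hmin : IsLeast (Set.range V) Vmin)
    (q_a p_a : ℝ) (hqa : q_a ≠ 0) (hpa : 0 < p_a)
    (hpa2 : p_a < Real.sqrt (-2 * Vmin)) :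
    ∀ E : ℝ, 0 < E → E ≤ p_a ^ 2 / 2 →
      ∃ εk : ℕ → ℝ, (∀ k, 0 < εk k) ∧ Tendsto εk atTop (nhds 0) ∧
        ∀ q q' : ℕ → ℝ → ℝ,
          (∀ k t, HasDerivAt (q k) (q' k t) t) →
          (∀ k t, HasDerivAt (q' k) (-(1 / εk k) * deriv V (q k t / εk k)) t) →
          (∀ k, q k 0 = q_a) → (∀ k, q' k 0 = p_a) →
          (∀ k t, (1 / 2) * (q' k t) ^ 2 + V (q k t / εk k) = E) ∧
            TendstoUniformly (fun k t => q k t)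
              (fun t => t / (∫ γ in (0:ℝ)..1, 1 / Real.sqrt (2 * (E - V γ))) + q_a)
              atTop := by
  intro E hE hE2
  have hVd : Differentiable ℝ V := hV.differentiable (by norm_num)
  have hpos : ∀ s, 0 < 2 * (E - V s) := fun s => by linarith [hmax.2 ⟨s, rfl⟩]
  set f : ℝ → ℝ := fun s => 1 / √(2 * (E - V s))
  have hfcont : Continuous f :=
    continuous_const.div (by fun_prop) fun s => (sqrt_pos.2 (hpos s)).ne'
  set σ := ∫ γ in (0 : ℝ)..1, f γ
  have hσ : 0 < σ := intervalIntegral_pos_of_pos (hfcont.intervalIntegrable 0 1)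
    (fun s => one_div_pos.2 (sqrt_pos.2 (hpos s))) one_pos
  obtain ⟨C, hC⟩ : ∃ C, ∀ ε, 0 < ε → ∀ x y,
      |(∫ s in x..y, f (s / ε)) - (y - x) * σ| ≤ C * ε := by
    have hfper : Function.Periodic f 1 := hper.comp fun v => 1 / √(2 * (E - v))
    simpa only [div_one] using hfper.exists_abs_intervalIntegral_comp_div_sub_mul_le one_ne_zero
      hfcont
  obtain ⟨x₀, hx₀⟩ : E - p_a ^ 2 / 2 ∈ Set.range V :=
    (isPreconnected_range hV.continuous).Icc_subset hmin.1 hmax.1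
      ⟨by nlinarith [(lt_sqrt hpa.le).1 hpa2], by linarith⟩
  obtain ⟨ε, hεpos, hεlim, hεV⟩ := hper.exists_seq_pos_tendsto_zero_apply_div_eq x₀ hqa
  refine ⟨ε, hεpos, hεlim, fun q q' hq hq' hq0 hq'0 => ?_⟩
  have henergy : ∀ k t, 1 / 2 * q' k t ^ 2 + V (q k t / ε k) = E := fun k t => by
    rw [energy_eq_of_hasDerivAt hVd (hq k) (hq' k), hq0, hq'0, hεV, hx₀]
    ring
  refine ⟨henergy, tendstoUniformly_of_dist_le (δ := fun k => C * ε k / σ) (fun k t => ?_) ?_⟩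
  · rw [dist_comm, dist_eq, ← hq0 k]
    exact abs_sub_le_of_energy_eq hVd hpos hσ (hC _ (hεpos k)) (hq k) (hq' k)
      (hq'0 k ▸ hpa) (henergy k 0) t
  · simpa using (hεlim.const_mul C).div_const σ

/-- Theorem 2.4 (construction part): for fixed initial velocity `p_a`, for every
    admissible energy `E ∈ (0, p_a²/2]` there is a sequence `ε_k → 0` along which all
    solutions of the initial value problem have energy `E` and converge uniformly to
    the line `t ↦ t/σ(E) + q_a`. -/
theorem ivp_fixed_velocity_family_of_limits
    (V : ℝ → ℝ) (hV : ContDiff ℝ 2 V) (hper : Function.Periodic V 1)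
    (hmax : IsGreatest (Set.range V) 0)
    (Vmin : ℝ) (hmin : IsLeast (Set.range V) Vmin) (hminneg : Vmin < 0)
    (q_a p_a : ℝ) (hqa : q_a ≠ 0) (hpa : 0 < p_a)
    (hpa2 : p_a < Real.sqrt (-2 * Vmin)) :
    ∀ E : ℝ, 0 < E → E ≤ p_a ^ 2 / 2 →
      ∃ εk : ℕ → ℝ, (∀ k, 0 < εk k) ∧ Tendsto εk atTop (nhds 0) ∧
        ∀ q q' : ℕ → ℝ → ℝ,
          (∀ k t, HasDerivAt (q k) (q' k t) t) →
          (∀ k t, HasDerivAt (q' k) (-(1 / εk k) * deriv V (q k t / εk k)) t) →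
          (∀ k, q k 0 = q_a) → (∀ k, q' k 0 = p_a) →
          (∀ k t, (1 / 2) * (q' k t) ^ 2 + V (q k t / εk k) = E) ∧
            TendstoUniformly (fun k t => q k t)
              (fun t => t / (∫ γ in (0:ℝ)..1, 1 / Real.sqrt (2 * (E - V γ))) + q_a)
              atTop :=
  ivp_fixed_velocity_family_of_limits_general V hV hper hmax Vmin hmin q_a p_a hqa hpa hpa2
end

section
/- In one space dimension, for E > 0 and V C², 1-periodic with max V = 0, the effective travel time from q_a to q_b (q_a < q_b) at energy E obtained by the Maupertuis principle — namely the limit as ε → 0 of the reparametrisation time t_ε(s) = ∫_{q_a}^{q_a + s(q_b−q_a)} (2(E − V(γ/ε)))^{-1/2} dγ evaluated at s = 1 — equals σ(E)(q_b − q_a), which coincides with the effective time obtained from the homogenised Hamilton–Jacobi equation, 1/H̄'(p) · (q_b − q_a) where H̄(p) = E. -/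
/-! The rescaled integral equals `ε (F (q_b / ε) - F (q_a / ε))` for a primitive `F` of the
periodic integrand, and `F` is linear with slope `σ(E)` up to a bounded error, so the limit is
`σ(E) (q_b - q_a)`. On the Hamilton–Jacobi side, `p(α) = ∫₀¹ √(2 (α - V))` is strictly
increasing with `p' = σ > 0` (differentiation under the integral sign); hence `H̄`, a left
inverse of `p`, is monotone and therefore continuous near `p(E)`, and the inverse function
theorem gives `H̄'(p(E)) = 1 / σ(E)`. -/

open intervalIntegral Filter MeasureTheory Set Topology

namespace Function.Periodic

variable {f : ℝ → ℝ} {T : ℝ}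

theorem exists_abs_primitive_sub_mean_mul_le (hper : Periodic f T) (hf : Continuous f)
    (hT : 0 < T) :
    ∃ C, ∀ x, |(∫ t in (0:ℝ)..x, f t) - (T⁻¹ * ∫ t in (0:ℝ)..T, f t) * x| ≤ C := by
  have hint : ∀ a b : ℝ, IntervalIntegrable f volume a b := hf.intervalIntegrable
  set m := T⁻¹ * ∫ t in (0:ℝ)..T, f t
  set G : ℝ → ℝ := fun x => (∫ t in (0:ℝ)..x, f t) - m * x
  have hGper : Periodic G T := fun x => by
    have hshift :
        ∫ t in (0:ℝ)..x + T, f t = (∫ t in (0:ℝ)..x, f t) + ∫ t in (0:ℝ)..T, f t := by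
      rw [← integral_add_adjacent_intervals (hint 0 x) (hint x (x + T)),
        hper.intervalIntegral_add_eq x 0, zero_add]
    simp only [G, m, hshift]
    field_simp
    ring
  have hGc : Continuous G :=
    (continuous_primitive hint 0).sub (continuous_const.mul continuous_id)
  obtain ⟨C, hC⟩ := (hGper.isBounded_of_continuous hT.ne' hGc).exists_norm_le
  exact ⟨C, fun x => hC (G x) ⟨x, rfl⟩⟩

theorem tendsto_intervalIntegral_comp_div (hper : Periodic f T) (hf : Continuous f)
    (hT : 0 < T) (a b : ℝ) :
    Tendsto (fun ε => ∫ γ in a..b, f (γ / ε)) (𝓝[>] 0)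
      (𝓝 ((T⁻¹ * ∫ t in (0:ℝ)..T, f t) * (b - a))) := by
  set m := T⁻¹ * ∫ t in (0:ℝ)..T, f t
  set G : ℝ → ℝ := fun x => (∫ t in (0:ℝ)..x, f t) - m * x
  obtain ⟨C, hC⟩ := hper.exists_abs_primitive_sub_mean_mul_le hf hT
  have hint : ∀ a b : ℝ, IntervalIntegrable f volume a b := hf.intervalIntegrable
  have hrescale : ∀ ε ∈ Ioi (0:ℝ),
      m * (b - a) + ε * (G (b / ε) - G (a / ε)) = ∫ γ in a..b, f (γ / ε) := by
    intro ε (hε : 0 < ε)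
    rw [integral_comp_div f hε.ne', smul_eq_mul,
      ← integral_interval_sub_left (hint 0 (b / ε)) (hint 0 (a / ε))]
    simp only [G]
    field_simp
    ring
  have hremainder : Tendsto (fun ε => ε * (G (b / ε) - G (a / ε))) (𝓝[>] 0) (𝓝 0) := by
    refine squeeze_zero_norm' ?_ ((continuous_mul_const (C + C)).tendsto' 0 0 (zero_mul _)
      |>.mono_left nhdsWithin_le_nhds)
    filter_upwards [self_mem_nhdsWithin] with ε (hε : 0 < ε)
    rw [Real.norm_eq_abs, abs_mul, abs_of_pos hε]
    exact mul_le_mul_of_nonneg_left ((abs_sub _ _).trans (add_le_add (hC _) (hC _))) hε.le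
  have hlim := (tendsto_const_nhds (x := m * (b - a))).add hremainder
  rw [add_zero] at hlim
  exact hlim.congr' (eventually_nhdsWithin_of_forall hrescale)

end Function.Periodic

theorem HasDerivAt.of_leftInvOn_Icc {p H : ℝ → ℝ} {a b x p' : ℝ} (hx : x ∈ Ioo a b)
    (hpc : ContinuousOn p (Icc a b)) (hmono : StrictMonoOn p (Icc a b))
    (hH : LeftInvOn H p (Icc a b)) (hp : HasDerivAt p p' x) (hp' : p' ≠ 0) :
    HasDerivAt H p'⁻¹ (p x) := by
  have hxIcc : x ∈ Icc a b := Ioo_subset_Icc_self hx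
  have haIcc : a ∈ Icc a b := left_mem_Icc.2 (hx.1.trans hx.2).le
  have hbIcc : b ∈ Icc a b := right_mem_Icc.2 (hx.1.trans hx.2).le
  have hsurj : Icc (p a) (p b) ⊆ p '' Icc a b := intermediate_value_Icc (hx.1.trans hx.2).le hpc
  have hnhds : Icc (p a) (p b) ∈ 𝓝 (p x) :=
    Icc_mem_nhds (hmono haIcc hxIcc hx.1) (hmono hxIcc hbIcc hx.2)
  have hHmono : MonotoneOn H (Icc (p a) (p b)) := by
    intro y₁ hy₁ y₂ hy₂ hle
    obtain ⟨α₁, hα₁, rfl⟩ := hsurj hy₁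
    obtain ⟨α₂, hα₂, rfl⟩ := hsurj hy₂
    rwa [hH hα₁, hH hα₂, ← hmono.le_iff_le hα₁ hα₂]
  have hHimage : Icc a b ⊆ H '' Icc (p a) (p b) := fun α hα =>
    ⟨p α, ⟨hmono.monotoneOn haIcc hα hα.1, hmono.monotoneOn hα hbIcc hα.2⟩, hH hα⟩
  have hHcont : ContinuousAt H (p x) :=
    continuousAt_of_monotoneOn_of_image_mem_nhds hHmono hnhds
      (mem_of_superset (by rw [hH hxIcc]; exact Icc_mem_nhds hx.1 hx.2) hHimage)
  refine HasDerivAt.of_local_left_inverse hHcont (by rwa [hH hxIcc]) hp' ?_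
  filter_upwards [hnhds] with y hy
  obtain ⟨α, hα, rfl⟩ := hsurj hy
  rw [hH hα]

/-- `cellAction V α` and `cellTime V α` are the paper's `p(α)` and `σ(α)`: the action and the
travel time across one period cell at energy `α`. -/
noncomputable def cellAction (V : ℝ → ℝ) (α : ℝ) : ℝ :=
  ∫ γ in (0:ℝ)..1, Real.sqrt (2 * (α - V γ))

noncomputable def cellTime (V : ℝ → ℝ) (α : ℝ) : ℝ :=
  ∫ γ in (0:ℝ)..1, 1 / Real.sqrt (2 * (α - V γ))

section CellIntegrals

variable {V : ℝ → ℝ} {M α : ℝ}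

theorem continuous_inv_sqrt_energy (hV : Continuous V) (hVM : ∀ t, V t ≤ M) (hα : M < α) :
    Continuous fun t => 1 / Real.sqrt (2 * (α - V t)) :=
  continuous_const.div (continuous_const.mul (continuous_const.sub hV)).sqrt fun t =>
    (Real.sqrt_pos.2 (by linarith [hVM t])).ne'

theorem cellTime_pos (hV : Continuous V) (hVM : ∀ t, V t ≤ M) (hα : M < α) :
    0 < cellTime V α :=
  intervalIntegral_pos_of_pos ((continuous_inv_sqrt_energy hV hVM hα).intervalIntegrable 0 1)
    (fun t => one_div_pos.2 (Real.sqrt_pos.2 (by linarith [hVM t]))) one_pos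

theorem hasDerivAt_cellAction (hV : Continuous V) (hVM : ∀ t, V t ≤ M) (hα : M < α) :
    HasDerivAt (cellAction V) (cellTime V α) α := by
  have hsqrt : ∀ β, Continuous fun t => Real.sqrt (2 * (β - V t)) := fun β =>
    (continuous_const.mul (continuous_const.sub hV)).sqrt
  have hball : ∀ t, ∀ x ∈ Metric.ball α ((α - M) / 2), α - M < 2 * (x - V t) := by
    intro t x hx
    have := (abs_lt.1 (Real.dist_eq x α ▸ Metric.mem_ball.1 hx)).1
    linarith [hVM t]
  refine (hasDerivAt_integral_of_dominated_loc_of_deriv_le (μ := volume)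
    (F' := fun x t => 1 / Real.sqrt (2 * (x - V t))) (bound := fun _ => 1 / Real.sqrt (α - M))
    (Metric.ball_mem_nhds α (half_pos (sub_pos.2 hα)))
    (.of_forall fun x => (hsqrt x).aestronglyMeasurable)
    ((hsqrt α).intervalIntegrable 0 1)
    (continuous_inv_sqrt_energy hV hVM hα).aestronglyMeasurable ?_
    (continuous_const.intervalIntegrable 0 1) ?_).2
  · refine .of_forall fun t _ x hx => ?_
    rw [Real.norm_eq_abs, abs_of_nonneg (by positivity)]
    exact one_div_le_one_div_of_le (Real.sqrt_pos.2 (by linarith))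
      (Real.sqrt_le_sqrt (hball t x hx).le)
  · refine .of_forall fun t _ x hx => ?_
    have hpos : 0 < 2 * (x - V t) := by linarith [hball t x hx]
    refine ((Real.hasDerivAt_sqrt hpos.ne').comp x
      (((hasDerivAt_id x).sub_const (V t)).const_mul 2)).congr_deriv ?_
    field_simp [(Real.sqrt_pos.2 hpos).ne']

theorem strictMonoOn_cellAction (hV : Continuous V) (hVM : ∀ t, V t ≤ M) :
    StrictMonoOn (cellAction V) (Ioi M) :=
  strictMonoOn_of_deriv_pos (convex_Ioi M)
    (fun β hβ => (hasDerivAt_cellAction hV hVM hβ).continuousAt.continuousWithinAt)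
    (fun β hβ => by
      rw [interior_Ioi] at hβ
      rw [(hasDerivAt_cellAction hV hVM hβ).deriv]
      exact cellTime_pos hV hVM hβ)

end CellIntegrals

theorem maupertuis_agrees_with_hamilton_jacobi_general
    (V : ℝ → ℝ) (hV : ContDiff ℝ 2 V) (hper : Function.Periodic V 1)
    (hmax : IsGreatest (Set.range V) 0)
    (E q_a q_b : ℝ) (hE : 0 < E)
    (H : ℝ → ℝ)
    (hH : ∀ α : ℝ, 0 < α → H (∫ γ in (0:ℝ)..1, Real.sqrt (2 * (α - V γ))) = α) :
    Tendsto (fun ε : ℝ => ∫ γ in q_a..q_b, 1 / Real.sqrt (2 * (E - V (γ / ε))))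
        (nhdsWithin 0 (Set.Ioi 0))
        (nhds ((∫ γ in (0:ℝ)..1, 1 / Real.sqrt (2 * (E - V γ))) * (q_b - q_a))) ∧
      H (∫ γ in (0:ℝ)..1, Real.sqrt (2 * (E - V γ))) = E ∧
      deriv H (∫ γ in (0:ℝ)..1, Real.sqrt (2 * (E - V γ))) ≠ 0 ∧
      (∫ γ in (0:ℝ)..1, 1 / Real.sqrt (2 * (E - V γ))) * (q_b - q_a) =
        (1 / deriv H (∫ γ in (0:ℝ)..1, Real.sqrt (2 * (E - V γ)))) * (q_b - q_a) := by
  show Tendsto _ _ (𝓝 (cellTime V E * (q_b - q_a))) ∧ H (cellAction V E) = E ∧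
    deriv H (cellAction V E) ≠ 0 ∧
    cellTime V E * (q_b - q_a) = 1 / deriv H (cellAction V E) * (q_b - q_a)
  have hVle : ∀ t, V t ≤ 0 := fun t => hmax.2 ⟨t, rfl⟩
  have hVc : Continuous V := hV.continuous
  have hσ := cellTime_pos hVc hVle hE
  have hIcc : Icc (E / 2) (2 * E) ⊆ Ioi 0 := fun β hβ => show 0 < β by linarith [hβ.1]
  have hHderiv : deriv H (cellAction V E) = (cellTime V E)⁻¹ :=
    (HasDerivAt.of_leftInvOn_Icc ⟨by linarith, by linarith⟩
      (fun β hβ => (hasDerivAt_cellAction hVc hVle (hIcc hβ)).continuousAt.continuousWithinAt)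
      ((strictMonoOn_cellAction hVc hVle).mono hIcc) (fun β hβ => hH β (hIcc hβ))
      (hasDerivAt_cellAction hVc hVle hE) hσ.ne').deriv
  refine ⟨?_, hH E hE, by rw [hHderiv]; exact inv_ne_zero hσ.ne',
    by rw [hHderiv, one_div, inv_inv]⟩
  simpa [cellTime] using
    (hper.comp fun v => 1 / Real.sqrt (2 * (E - v))).tendsto_intervalIntegral_comp_div
      (continuous_inv_sqrt_energy hVc hVle hE) one_pos q_a q_b

/-- Agreement of Maupertuis and Hamilton–Jacobi averaging in one dimension: the
    Maupertuis reparametrisation time from `q_a` to `q_b` converges to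
    `σ(E)(q_b − q_a)`, which coincides with the effective time
    `(1/H̄'(p))(q_b − q_a)` from the homogenised Hamilton–Jacobi equation, where
    `H̄(p) = E`. -/
theorem maupertuis_agrees_with_hamilton_jacobi
    (V : ℝ → ℝ) (hV : ContDiff ℝ 2 V) (hper : Function.Periodic V 1)
    (hmax : IsGreatest (Set.range V) 0)
    (E q_a q_b : ℝ) (hE : 0 < E) (hab : q_a < q_b)
    (H : ℝ → ℝ)
    (hH : ∀ α : ℝ, 0 < α → H (∫ γ in (0:ℝ)..1, Real.sqrt (2 * (α - V γ))) = α)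
    (hHcont : ContinuousAt H (∫ γ in (0:ℝ)..1, Real.sqrt (2 * (E - V γ)))) :
    Tendsto (fun ε : ℝ => ∫ γ in q_a..q_b, 1 / Real.sqrt (2 * (E - V (γ / ε))))
        (nhdsWithin 0 (Set.Ioi 0))
        (nhds ((∫ γ in (0:ℝ)..1, 1 / Real.sqrt (2 * (E - V γ))) * (q_b - q_a))) ∧
      H (∫ γ in (0:ℝ)..1, Real.sqrt (2 * (E - V γ))) = E ∧
      deriv H (∫ γ in (0:ℝ)..1, Real.sqrt (2 * (E - V γ))) ≠ 0 ∧
      (∫ γ in (0:ℝ)..1, 1 / Real.sqrt (2 * (E - V γ))) * (q_b - q_a) =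
        (1 / deriv H (∫ γ in (0:ℝ)..1, Real.sqrt (2 * (E - V γ)))) * (q_b - q_a) :=
  maupertuis_agrees_with_hamilton_jacobi_general V hV hper hmax E q_a q_b hE H hH
end
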